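/- For the first-black-hat strategy f(y) = 2^{-⌊log₂ y⌋} in the two-player continuous Levine game, for every p ≥ 1 and every x ∈ [2^{-p}, 2^{-(p-1)}), one has sup_{u ≥ 0} ∫₀¹ ε(f(y)x) ε(u y) dy = 2^{-p} = ∫₀¹ ε(f(y)x) ε(f(x)y) dy. Consequently sup_{g measurable nonnegative} ∫₀¹∫₀¹ ε(f(y)x) ε(g(x)y) dx dy = 1/3, achieved by g = f; i.e., the first-black-hat strategy is a best response to itself. -/

import Mathlib

/-- `ε(t) = ⌊t⌋ - 2⌊t/2⌋`, the parity of `⌊t⌋`. -/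
noncomputable def eps (t : ℝ) : ℝ := (⌊t⌋ : ℝ) - 2 * (⌊t / 2⌋ : ℝ)

/-- The first-black-hat strategy `f(y) = 2^{-⌊log₂ y⌋}`. -/
noncomputable def fbh (y : ℝ) : ℝ := (2 : ℝ) ^ (-⌊Real.logb 2 y⌋)

/-!
Fix `x ∈ [2^{-p}, 2^{-p+1})`, so that `f(x) = 2^p`. For `y ≥ 2^{-p+1}` we have
`f(y) ≤ 2^{p-1}`, hence `f(y) x < 1` and `ε(f(y) x) = 0`. On the remaining interval
`[0, 2^{-p+1}]` the first factor is at most `1`, and `∫₀ᴸ ε(u y) dy ≤ L / 2` for every `u ≥ 0`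
because `ε(t + 1) = 1 - ε(t)`. This bounds the inner integral by `2^{-p} = f(x)⁻¹`. For
`u = 2^p` the integrand is exactly the indicator of `[2^{-p}, 2^{-p+1})`, so the bound is attained.

Finally `I = ∫₀¹ f(x)⁻¹ dx = 1/3`: the integrand is `1/2` on `[1/2, 1)` and `f(x/2) = 2 f(x)`,
so `I = I/4 + 1/4`.
-/

open MeasureTheory Set intervalIntegral

lemma eps_eq_floor_emod_two (t : ℝ) : eps t = ((⌊t⌋ % 2 : ℤ) : ℝ) := by
  have h := Int.floor_div_natCast t 2
  push_cast at h
  rw [eps, h, Int.emod_def]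
  push_cast
  ring

lemma eps_eq_zero_or_eq_one (t : ℝ) : eps t = 0 ∨ eps t = 1 := by
  rw [eps_eq_floor_emod_two]
  rcases Int.emod_two_eq ⌊t⌋ with h | h <;> simp [h]

lemma eps_nonneg (t : ℝ) : 0 ≤ eps t := by
  rcases eps_eq_zero_or_eq_one t with h | h <;> simp [h]

lemma eps_le_one (t : ℝ) : eps t ≤ 1 := by
  rcases eps_eq_zero_or_eq_one t with h | h <;> simp [h]

lemma abs_eps_le_one (t : ℝ) : |eps t| ≤ 1 :=
  abs_le.2 ⟨by linarith [eps_nonneg t], eps_le_one t⟩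

lemma abs_eps_mul_eps_le_one (s t : ℝ) : |eps s * eps t| ≤ 1 := by
  rw [abs_mul]
  exact mul_le_one₀ (abs_eps_le_one s) (abs_nonneg _) (abs_eps_le_one t)

lemma eps_of_mem_Ico_zero_one {t : ℝ} (ht : t ∈ Ico 0 1) : eps t = 0 := by
  rw [eps_eq_floor_emod_two, Int.floor_eq_zero_iff.2 ht]
  simp

lemma eps_of_mem_Ico_one_two {t : ℝ} (ht : t ∈ Ico 1 2) : eps t = 1 := by
  have h : ⌊t⌋ = 1 := Int.floor_eq_iff.2 ⟨by exact_mod_cast ht.1, by norm_num [ht.2]⟩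
  rw [eps_eq_floor_emod_two, h]
  simp

lemma eps_add_one (t : ℝ) : eps (t + 1) = 1 - eps t := by
  rw [eps_eq_floor_emod_two, eps_eq_floor_emod_two, Int.floor_add_one]
  rcases Int.emod_two_eq ⌊t⌋ with h | h <;> simp [Int.add_emod, h]

@[fun_prop]
lemma measurable_eps : Measurable eps := by
  have h : Measurable fun t : ℝ => (⌊t⌋ : ℝ) := measurable_from_top.comp Int.measurable_floor
  exact h.sub ((h.comp (measurable_id.div_const 2)).const_mul 2)

lemma intervalIntegrable_of_abs_le_one {f : ℝ → ℝ} (hf : Measurable f) (h : ∀ t, |f t| ≤ 1)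
    (a b : ℝ) : IntervalIntegrable f volume a b :=
  intervalIntegrable_const.mono_fun' hf.aestronglyMeasurable (ae_of_all _ h)

lemma integral_eps_le_half (T : ℝ) : ∫ t in 0..T, eps t ≤ T / 2 := by
  have hI (a b : ℝ) : IntervalIntegrable eps volume a b :=
    intervalIntegrable_of_abs_le_one measurable_eps abs_eps_le_one a b
  set A := ∫ t in 0..T, eps t
  have h01 : ∫ t in (0 : ℝ)..1, eps t = 0 := by
    rw [integral_congr_Ioo_of_le zero_le_one (g := 0)
      fun t ht => eps_of_mem_Ico_zero_one (Ioo_subset_Ico_self ht)]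
    simp
  have h1T : ∫ t in (1 : ℝ)..T + 1, eps t = T - A := by
    have h := integral_comp_add_right eps (a := 0) (b := T) 1
    rw [zero_add] at h
    rw [← h, integral_congr fun t _ => eps_add_one t,
      integral_sub intervalIntegrable_const (hI 0 T)]
    simp [A]
  have hA : A ≤ ∫ t in (0 : ℝ)..T + 1, eps t := by
    rw [← integral_add_adjacent_intervals (hI 0 T) (hI T (T + 1))]
    have h : 0 ≤ ∫ t in T..T + 1, eps t := integral_nonneg (by linarith) fun t _ => eps_nonneg t
    linarith
  rw [← integral_add_adjacent_intervals (hI 0 1) (hI 1 (T + 1)), h01, h1T] at hA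
  linarith

lemma integral_eps_mul_le_half {u L : ℝ} (hu : 0 ≤ u) (hL : 0 ≤ L) :
    ∫ y in 0..L, eps (u * y) ≤ L / 2 := by
  rcases hu.eq_or_lt with rfl | hu
  · simp only [zero_mul, eps_of_mem_Ico_zero_one (show (0 : ℝ) ∈ Ico 0 1 by simp),
      intervalIntegral.integral_zero]
    positivity
  calc ∫ y in 0..L, eps (u * y) = u⁻¹ * ∫ t in 0..u * L, eps t := by
        rw [integral_comp_mul_left _ hu.ne', mul_zero, smul_eq_mul]
    _ ≤ u⁻¹ * (u * L / 2) := by gcongr; exact integral_eps_le_half _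
    _ = L / 2 := by field_simp

def dyadicIco (p : ℤ) : Set ℝ := Ico (2 ^ (-p)) (2 ^ (-p + 1))

lemma measurableSet_dyadicIco (p : ℤ) : MeasurableSet (dyadicIco p) := measurableSet_Ico

lemma volume_real_dyadicIco (p : ℤ) : volume.real (dyadicIco p) = 2 ^ (-p) := by
  rw [dyadicIco, Real.volume_real_Ico_of_le (zpow_le_zpow_right₀ one_le_two (by omega)),
    zpow_add_one₀ two_ne_zero]
  ring

lemma dyadicIco_subset_Ioc {p : ℤ} (hp : 1 ≤ p) : dyadicIco p ⊆ Ioc 0 1 := fun y hy =>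
  ⟨(zpow_pos two_pos _).trans_le hy.1,
    hy.2.le.trans (zpow_le_one_of_nonpos₀ (one_le_two : (1 : ℝ) ≤ 2) (by omega))⟩

lemma log_two_eq_neg_of_mem_dyadicIco {y : ℝ} {p : ℤ} (hy : y ∈ dyadicIco p) :
    Int.log 2 y = -p := by
  have hy0 : 0 < y := (zpow_pos two_pos _).trans_le hy.1
  have h1 := (Int.zpow_le_iff_le_log (b := 2) one_lt_two hy0).1 (by exact_mod_cast hy.1)
  have h2 := (Int.lt_zpow_iff_log_lt (b := 2) one_lt_two hy0).1 (by exact_mod_cast hy.2)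
  omega

lemma exists_mem_dyadicIco {x : ℝ} (hx : x ∈ Ioo 0 1) : ∃ p : ℤ, 1 ≤ p ∧ x ∈ dyadicIco p := by
  refine ⟨-Int.log 2 x, ?_, ?_, ?_⟩
  · have := (Int.lt_zpow_iff_log_lt (b := 2) (x := 0) one_lt_two hx.1).1 (by simpa using hx.2)
    omega
  · simpa using Int.zpow_log_le_self (b := 2) one_lt_two hx.1
  · simpa [add_comm] using Int.lt_zpow_succ_log_self (b := 2) one_lt_two x

lemma fbh_eq_two_zpow_neg_log {y : ℝ} (hy : 0 ≤ y) : fbh y = 2 ^ (-Int.log 2 y) := by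
  have h := Real.floor_logb_natCast (b := 2) hy
  push_cast at h
  rw [fbh, h]

lemma fbh_pos (y : ℝ) : 0 < fbh y := zpow_pos two_pos _

@[fun_prop]
lemma measurable_fbh : Measurable fbh :=
  (measurable_from_top (f := fun n : ℤ => (2 : ℝ) ^ (-n))).comp
    (Int.measurable_floor.comp (Real.measurable_log.div_const _))

lemma fbh_antitoneOn : AntitoneOn fbh (Ioi 0) := by
  intro y hy z hz hyz
  rw [fbh_eq_two_zpow_neg_log (le_of_lt hy), fbh_eq_two_zpow_neg_log (le_of_lt hz)]
  exact zpow_le_zpow_right₀ one_le_two (neg_le_neg (Int.log_mono_right hy hyz))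

lemma fbh_of_mem_dyadicIco {y : ℝ} {p : ℤ} (hy : y ∈ dyadicIco p) : fbh y = 2 ^ p := by
  rw [fbh_eq_two_zpow_neg_log ((zpow_pos two_pos _).le.trans hy.1),
    log_two_eq_neg_of_mem_dyadicIco hy, neg_neg]

lemma one_le_fbh {x : ℝ} (hx : x ∈ Ioc 0 1) : 1 ≤ fbh x := by
  have h1 : fbh 1 = 1 := by simpa using fbh_of_mem_dyadicIco (p := 0) (by norm_num [dyadicIco])
  calc (1 : ℝ) = fbh 1 := h1.symm
    _ ≤ fbh x := fbh_antitoneOn hx.1 (mem_Ioi.2 one_pos) hx.2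

lemma fbh_div_two {x : ℝ} (hx : 0 < x) : fbh (x / 2) = 2 * fbh x := by
  rw [fbh, fbh, Real.logb_div hx.ne' two_ne_zero, Real.logb_self_eq_one one_lt_two,
    Int.floor_sub_one, neg_sub, zpow_sub₀ two_ne_zero, zpow_neg, zpow_one, div_eq_mul_inv]

section Dyadic

variable {p : ℤ} {x y : ℝ}

lemma two_zpow_mul_two_zpow_neg (p : ℤ) : (2 : ℝ) ^ p * 2 ^ (-p) = 1 := by
  rw [mul_comm, zpow_neg_mul_zpow_self p two_ne_zero]

lemma two_zpow_mul_lt_one (hy : y < 2 ^ (-p)) : 2 ^ p * y < 1 := by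
  calc (2 : ℝ) ^ p * y < 2 ^ p * 2 ^ (-p) := by gcongr
    _ = 1 := two_zpow_mul_two_zpow_neg p

lemma two_zpow_mul_mem_Ico_one_two (hy : y ∈ dyadicIco p) : 2 ^ p * y ∈ Ico (1 : ℝ) 2 := by
  have h : (2 : ℝ) ^ p * 2 ^ (-p + 1) = 2 := by
    rw [zpow_add_one₀ two_ne_zero, ← mul_assoc, two_zpow_mul_two_zpow_neg, one_mul]
  refine ⟨?_, ?_⟩
  · calc (1 : ℝ) = 2 ^ p * 2 ^ (-p) := (two_zpow_mul_two_zpow_neg p).symm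
      _ ≤ 2 ^ p * y := by gcongr; exact hy.1
  · calc (2 : ℝ) ^ p * y < 2 ^ p * 2 ^ (-p + 1) := by gcongr; exact hy.2
      _ = 2 := h

lemma eps_fbh_mul_of_le (hx : x ∈ dyadicIco p) (hy : 2 ^ (-p + 1) ≤ y) :
    eps (fbh y * x) = 0 := by
  have hx0 : 0 < x := (zpow_pos two_pos _).trans_le hx.1
  have hfy : fbh y ≤ 2 ^ (p - 1) := by
    calc fbh y ≤ fbh (2 ^ (-p + 1)) :=
          fbh_antitoneOn (zpow_pos two_pos _ : (0 : ℝ) < _) ((zpow_pos two_pos _).trans_le hy) hy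
      _ = 2 ^ (p - 1) := fbh_of_mem_dyadicIco
          ⟨le_of_eq (by congr 1; ring), zpow_lt_zpow_right₀ one_lt_two (by omega)⟩
  refine eps_of_mem_Ico_zero_one ⟨mul_nonneg (fbh_pos y).le hx0.le, ?_⟩
  calc fbh y * x ≤ 2 ^ (p - 1) * x := by gcongr
    _ < 1 := two_zpow_mul_lt_one (by rw [show -(p - 1) = -p + 1 by ring]; exact hx.2)

lemma eps_fbh_mul_mul_eps_two_zpow_mul (hx : x ∈ dyadicIco p) (hy : 0 ≤ y) :
    eps (fbh y * x) * eps (2 ^ p * y) = (dyadicIco p).indicator 1 y := by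
  by_cases hmem : y ∈ dyadicIco p
  · rw [indicator_of_mem hmem, fbh_of_mem_dyadicIco hmem,
      eps_of_mem_Ico_one_two (two_zpow_mul_mem_Ico_one_two hx),
      eps_of_mem_Ico_one_two (two_zpow_mul_mem_Ico_one_two hmem)]
    simp
  rw [indicator_of_notMem hmem]
  rcases lt_or_ge y (2 ^ (-p)) with hlt | hge
  · rw [eps_of_mem_Ico_zero_one ⟨by positivity, two_zpow_mul_lt_one hlt⟩, mul_zero]
  · rw [eps_fbh_mul_of_le hx (not_lt.1 fun h => hmem ⟨hge, h⟩), zero_mul]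

lemma intervalIntegrable_eps_fbh_mul (x u a b : ℝ) :
    IntervalIntegrable (fun y => eps (fbh y * x) * eps (u * y)) volume a b :=
  intervalIntegrable_of_abs_le_one (by fun_prop) (fun _ => abs_eps_mul_eps_le_one _ _) a b

lemma integral_eps_fbh_mul_two_zpow_mul (hp : 1 ≤ p) (hx : x ∈ dyadicIco p) :
    ∫ y in 0..1, eps (fbh y * x) * eps (2 ^ p * y) = 2 ^ (-p) := by
  have hcongr : EqOn (fun y => eps (fbh y * x) * eps (2 ^ p * y)) ((dyadicIco p).indicator 1)
      (uIcc 0 1) := fun y hy =>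
    eps_fbh_mul_mul_eps_two_zpow_mul hx (uIcc_of_le (zero_le_one' ℝ) ▸ hy).1
  rw [integral_congr hcongr, integral_of_le zero_le_one,
    ← MeasureTheory.integral_indicator measurableSet_Ioc, indicator_indicator,
    inter_eq_self_of_subset_right (dyadicIco_subset_Ioc hp),
    integral_indicator_one (measurableSet_dyadicIco p), volume_real_dyadicIco]

lemma integral_eps_fbh_mul_le (hp : 1 ≤ p) (hx : x ∈ dyadicIco p) {u : ℝ} (hu : 0 ≤ u) :
    ∫ y in 0..1, eps (fbh y * x) * eps (u * y) ≤ 2 ^ (-p) := by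
  set L : ℝ := 2 ^ (-p + 1) with hL_def
  have hL : L ≤ 1 := zpow_le_one_of_nonpos₀ one_le_two (by omega)
  have hL0 : 0 ≤ L := by positivity
  rw [← integral_add_adjacent_intervals (intervalIntegrable_eps_fbh_mul x u 0 L)
    (intervalIntegrable_eps_fbh_mul x u L 1)]
  have htail : ∫ y in L..1, eps (fbh y * x) * eps (u * y) = 0 := by
    rw [integral_congr (g := 0) fun y hy => by
      rw [Pi.zero_apply, eps_fbh_mul_of_le hx (uIcc_of_le hL ▸ hy).1, zero_mul]]
    simp
  calc (∫ y in 0..L, eps (fbh y * x) * eps (u * y)) + ∫ y in L..1, eps (fbh y * x) * eps (u * y)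
      ≤ ∫ y in 0..L, eps (u * y) := by
        rw [htail, add_zero]
        refine integral_mono_on hL0 (intervalIntegrable_eps_fbh_mul x u 0 L)
          (intervalIntegrable_of_abs_le_one (by fun_prop) (fun _ => abs_eps_le_one _) 0 L)
          fun y _ => mul_le_of_le_one_left (eps_nonneg _) (eps_le_one _)
    _ ≤ L / 2 := integral_eps_mul_le_half hu hL0
    _ = 2 ^ (-p) := by rw [hL_def, zpow_add_one₀ two_ne_zero]; ring

end Dyadic

lemma integral_eps_fbh_mul_le_inv_fbh {x u : ℝ} (hx : x ∈ Ioo 0 1) (hu : 0 ≤ u) :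
    ∫ y in 0..1, eps (fbh y * x) * eps (u * y) ≤ (fbh x)⁻¹ := by
  obtain ⟨p, hp, hxp⟩ := exists_mem_dyadicIco hx
  rw [fbh_of_mem_dyadicIco hxp, ← zpow_neg]
  exact integral_eps_fbh_mul_le hp hxp hu

lemma integral_eps_fbh_mul_fbh {x : ℝ} (hx : x ∈ Ioo 0 1) :
    ∫ y in 0..1, eps (fbh y * x) * eps (fbh x * y) = (fbh x)⁻¹ := by
  obtain ⟨p, hp, hxp⟩ := exists_mem_dyadicIco hx
  rw [fbh_of_mem_dyadicIco hxp, ← zpow_neg]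
  exact integral_eps_fbh_mul_two_zpow_mul hp hxp

lemma intervalIntegrable_inv_fbh : IntervalIntegrable (fun x => (fbh x)⁻¹) volume 0 1 := by
  refine (intervalIntegrable_const (c := (1 : ℝ))).mono_fun' (by fun_prop) ?_
  rw [uIoc_of_le zero_le_one]
  refine ae_restrict_of_forall_mem measurableSet_Ioc fun x hx => ?_
  dsimp only
  rw [norm_inv, Real.norm_of_nonneg (fbh_pos x).le]
  exact inv_le_one_of_one_le₀ (one_le_fbh hx)

lemma integral_inv_fbh : ∫ x in (0 : ℝ)..1, (fbh x)⁻¹ = 1 / 3 := by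
  set I := ∫ x in (0 : ℝ)..1, (fbh x)⁻¹
  have hupper : ∫ x in (1 / 2 : ℝ)..1, (fbh x)⁻¹ = 1 / 4 := by
    have h : EqOn (fun x => (fbh x)⁻¹) (fun _ => 1 / 2) (Ioo (1 / 2) 1) := fun x hx => by
      dsimp only
      rw [fbh_of_mem_dyadicIco (p := 1) ⟨by norm_num; exact hx.1.le, by norm_num; exact hx.2⟩]
      norm_num
    rw [integral_congr_Ioo_of_le (by norm_num) h]
    norm_num
  have hlower : ∫ x in (0 : ℝ)..1 / 2, (fbh x)⁻¹ = I / 4 := by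
    have h : EqOn (fun x => (fbh (x / 2))⁻¹) (fun x => (fbh x)⁻¹ / 2) (Ioo 0 1) := fun x hx => by
      dsimp only
      rw [fbh_div_two hx.1, mul_inv, div_eq_mul_inv, mul_comm]
    have hscale := integral_comp_div (fun x => (fbh x)⁻¹) (a := 0) (b := 1) two_ne_zero
    rw [integral_congr_Ioo_of_le zero_le_one h, intervalIntegral.integral_div, zero_div,
      smul_eq_mul] at hscale
    linarith
  have hsub {a b : ℝ} (h0 : 0 ≤ a) (hab : a ≤ b) (h1 : b ≤ 1) :
      IntervalIntegrable (fun x => (fbh x)⁻¹) volume a b :=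
    intervalIntegrable_inv_fbh.mono_set (by
      rw [uIcc_of_le hab, uIcc_of_le zero_le_one]; exact Icc_subset_Icc h0 h1)
  have hsplit : I = I / 4 + 1 / 4 := by
    rw [← hlower, ← hupper,
      integral_add_adjacent_intervals (hsub le_rfl (by norm_num) (by norm_num))
        (hsub (by norm_num) (by norm_num) le_rfl)]
  linarith

lemma intervalIntegrable_integral_eps_fbh_mul {g : ℝ → ℝ} (hg : Measurable g) :
    IntervalIntegrable (fun x => ∫ y in (0 : ℝ)..1, eps (fbh y * x) * eps (g x * y))
      volume 0 1 := by
  have hF : Measurable fun z : ℝ × ℝ => eps (fbh z.2 * z.1) * eps (g z.1 * z.2) := by fun_prop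
  refine intervalIntegrable_of_abs_le_one ?_ (fun x => ?_) 0 1
  · simp only [integral_of_le zero_le_one]
    exact hF.stronglyMeasurable.integral_prod_right'.measurable
  · simpa using norm_integral_le_of_norm_le_const (a := 0) (b := 1) (C := 1)
      (f := fun y => eps (fbh y * x) * eps (g x * y))
      fun y _ => abs_eps_mul_eps_le_one (fbh y * x) (g x * y)

lemma integral_integral_eps_fbh_mul_le {g : ℝ → ℝ} (hg : Measurable g) (hg0 : ∀ x, 0 ≤ g x) :
    ∫ x in (0 : ℝ)..1, ∫ y in (0 : ℝ)..1, eps (fbh y * x) * eps (g x * y) ≤ 1 / 3 := by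
  rw [← integral_inv_fbh]
  exact integral_mono_on_of_le_Ioo zero_le_one (intervalIntegrable_integral_eps_fbh_mul hg)
    intervalIntegrable_inv_fbh fun x hx => integral_eps_fbh_mul_le_inv_fbh hx (hg0 x)

lemma integral_integral_eps_fbh_mul_fbh :
    ∫ x in (0 : ℝ)..1, ∫ y in (0 : ℝ)..1, eps (fbh y * x) * eps (fbh x * y) = 1 / 3 := by
  rw [integral_congr_Ioo_of_le zero_le_one fun x hx => integral_eps_fbh_mul_fbh hx]
  exact integral_inv_fbh

/-- For the first-black-hat strategy `f` in the two-player continuous Levine game: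
for every `p ≥ 1` and `x ∈ [2^{-p}, 2^{-(p-1)})`,
`sup_{u ≥ 0} ∫₀¹ ε(f(y)x) ε(uy) dy = 2^{-p} = ∫₀¹ ε(f(y)x) ε(f(x)y) dy`; consequently
`sup_g ∫₀¹∫₀¹ ε(f(y)x) ε(g(x)y) dx dy = 1/3`, attained at `g = f`: the first-black-hat
strategy is a best response to itself. -/
theorem fbh_best_response :
    (∀ p : ℕ, 1 ≤ p →
      ∀ x ∈ Set.Ico ((2 : ℝ) ^ (-(p : ℤ))) ((2 : ℝ) ^ (-(p : ℤ) + 1)),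
        sSup {r : ℝ | ∃ u : ℝ, 0 ≤ u ∧
            r = ∫ y in (0 : ℝ)..1, eps (fbh y * x) * eps (u * y)} = (2 : ℝ) ^ (-(p : ℤ)) ∧
        (∫ y in (0 : ℝ)..1, eps (fbh y * x) * eps (fbh x * y)) = (2 : ℝ) ^ (-(p : ℤ))) ∧
    sSup {P : ℝ | ∃ g : ℝ → ℝ, Measurable g ∧ (∀ x, 0 ≤ g x) ∧
        P = ∫ x in (0 : ℝ)..1, ∫ y in (0 : ℝ)..1, eps (fbh y * x) * eps (g x * y)} = 1 / 3 ∧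
    (∫ x in (0 : ℝ)..1, ∫ y in (0 : ℝ)..1, eps (fbh y * x) * eps (fbh x * y)) = 1 / 3 := by
  refine ⟨fun p hp x hx => ?_, ?_, integral_integral_eps_fbh_mul_fbh⟩
  · have hp' : (1 : ℤ) ≤ p := by exact_mod_cast hp
    have hbest := integral_eps_fbh_mul_two_zpow_mul hp' hx
    refine ⟨IsGreatest.csSup_eq ⟨⟨2 ^ (p : ℤ), by positivity, hbest.symm⟩, ?_⟩, ?_⟩
    · rintro r ⟨u, hu, rfl⟩
      exact integral_eps_fbh_mul_le hp' hx hu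
    · rwa [fbh_of_mem_dyadicIco hx]
  · refine IsGreatest.csSup_eq ⟨⟨fbh, measurable_fbh, fun x => (fbh_pos x).le,
      integral_integral_eps_fbh_mul_fbh.symm⟩, ?_⟩
    rintro P ⟨g, hg, hg0, rfl⟩
    exact integral_integral_eps_fbh_mul_le hg hg0
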